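/- arXiv:1801.00331 — 4 statements merged into one kernel-verified Lean document; each statement's English description precedes it below -/
import Mathlib

section
/- If A is a normal bounded operator on a Hilbert space, then 2|A| ≥ |Re A| + |Im A|, where Re A = (A + A*)/2, Im A = (A - A*)/(2i), and |T| = (T*T)^{1/2}. -/
open scoped InnerProductSpace

/-- The absolute value `|T| = (T*T)^{1/2}` of a bounded operator. -/
noncomputable def opAbs {H : Type*} [NormedAddCommGroup H] [InnerProductSpace ℂ H]
    [CompleteSpace H] (T : H →L[ℂ] H) : H →L[ℂ] H :=
  CFC.sqrt (star T * T)

/-- The real part `Re A = (A + A*)/2`. -/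
noncomputable def opRe {H : Type*} [NormedAddCommGroup H] [InnerProductSpace ℂ H]
    [CompleteSpace H] (A : H →L[ℂ] H) : H →L[ℂ] H :=
  (1 / 2 : ℂ) • (A + star A)

/-- The imaginary part `Im A = (A - A*)/(2i)`. -/
noncomputable def opIm {H : Type*} [NormedAddCommGroup H] [InnerProductSpace ℂ H]
    [CompleteSpace H] (A : H →L[ℂ] H) : H →L[ℂ] H :=
  (1 / (2 * Complex.I) : ℂ) • (A - star A)

/-!
For normal `a`, the continuous functional calculus turns `Re a`, `Im a`, `|Re a|`, `|Im a|` and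
`|a|` into `cfc` of `Re z`, `Im z`, `|Re z|`, `|Im z|` and `‖z‖` at `a`. Since `cfc · a` is
monotone, the operator inequality reduces to `|Re z| + |Im z| ≤ 2 ‖z‖` on the spectrum.
-/

section CStarAlgebra

variable {A : Type*} [CStarAlgebra A]

lemma cfc_coe_re_eq (a : A) [IsStarNormal a] :
    cfc (fun z : ℂ ↦ (z.re : ℂ)) a = (1 / 2 : ℂ) • (a + star a) := by
  have re_eq : (fun z : ℂ ↦ (z.re : ℂ)) = fun z ↦ (1 / 2 : ℂ) * (z + star z) := by
    funext z
    rw [RCLike.star_def, Complex.add_conj]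
    push_cast
    ring
  rw [re_eq, cfc_const_mul _ _ a, cfc_add a (fun z ↦ z) star, cfc_id' ℂ a, cfc_star_id a]

lemma cfc_coe_im_eq (a : A) [IsStarNormal a] :
    cfc (fun z : ℂ ↦ (z.im : ℂ)) a = (1 / (2 * Complex.I) : ℂ) • (a - star a) := by
  have im_eq : (fun z : ℂ ↦ (z.im : ℂ)) = fun z ↦ (1 / (2 * Complex.I) : ℂ) * (z - star z) := by
    funext z
    rw [RCLike.star_def, Complex.sub_conj]
    field_simp
    push_cast
    ring
  rw [im_eq, cfc_const_mul _ _ a, cfc_sub (fun z ↦ z) star a, cfc_id' ℂ a, cfc_star_id a]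

variable [PartialOrder A] [StarOrderedRing A]

lemma CFC.abs_eq_cfc_coe_norm (a : A) [IsStarNormal a] :
    CFC.abs a = cfc (fun z : ℂ ↦ (‖z‖ : ℂ)) a := by
  rw [CFC.abs_eq_cfcₙ_coe_norm ℂ a, cfcₙ_eq_cfc]
  rfl

lemma CFC.abs_cfc (f : ℂ → ℂ) (a : A) [IsStarNormal a]
    (hf : ContinuousOn f (spectrum ℂ a) := by cfc_cont_tac) :
    CFC.abs (cfc f a) = cfc (fun z ↦ (‖f z‖ : ℂ)) a := by
  rw [CFC.abs_eq_cfc_coe_norm, ← cfc_comp' (fun z : ℂ ↦ (‖z‖ : ℂ)) f a]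

open ComplexOrder in
lemma CFC.abs_re_add_abs_im_le_two_smul_abs (a : A) [IsStarNormal a] :
    CFC.abs ((1 / 2 : ℂ) • (a + star a)) + CFC.abs ((1 / (2 * Complex.I) : ℂ) • (a - star a))
      ≤ (2 : ℂ) • CFC.abs a := by
  rw [← cfc_coe_re_eq, ← cfc_coe_im_eq, CFC.abs_cfc _ a, CFC.abs_cfc _ a,
    CFC.abs_eq_cfc_coe_norm a,
    ← cfc_add a (fun z ↦ (‖(z.re : ℂ)‖ : ℂ)) (fun z ↦ (‖(z.im : ℂ)‖ : ℂ)),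
    ← cfc_const_mul _ _ a]
  refine cfc_mono fun z _ ↦ ?_
  norm_cast
  simp only [Real.norm_eq_abs]
  linarith [Complex.abs_re_le_norm z, Complex.abs_im_le_norm z]

end CStarAlgebra

/-- If `A` is a normal bounded operator on a Hilbert space, then
`2 |A| ≥ |Re A| + |Im A|` in the Loewner order. -/
theorem two_smul_abs_ge_abs_re_add_abs_im {H : Type*} [NormedAddCommGroup H]
    [InnerProductSpace ℂ H] [CompleteSpace H] (A : H →L[ℂ] H) (hA : IsStarNormal A) :
    opAbs (opRe A) + opAbs (opIm A) ≤ (2 : ℂ) • opAbs A :=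
  CFC.abs_re_add_abs_im_le_two_smul_abs A
end

section
/- Douglas' Lemma: Let A, B ∈ B(H) with A A* ≤ B B*. Then there exists C ∈ B(H) with A = B C, ‖C‖ ≤ 1, ker C = ker A, and the range of C contained in the closure of the range of B*. -/
/-!
The hypothesis `A A* ≤ B B*` says exactly that `‖A* x‖ ≤ ‖B* x‖` for all `x`, so `B* x ↦ A* x`
is a well-defined contraction on the range of `B*`. Extending it by continuity to the closure of
that range and by zero on its orthogonal complement gives a contraction `D` with `D B* = A*`, and
`C = D*` works: `B C = A`, the range of `C` lies in `(ker D)ᗮ ⊆ closure (range B*)`, and a vector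
of `ker B ∩ closure (range B*) = ker B ∩ (ker B)ᗮ` vanishes, which gives `ker C = ker A`.
-/

namespace LinearMap

open ContinuousLinearMap Submodule

theorem denseRange_codRestrict_topologicalClosure {R M M' : Type*} [Semiring R]
    [AddCommMonoid M] [Module R M] [AddCommMonoid M'] [Module R M'] [TopologicalSpace M']
    [ContinuousAdd M'] [ContinuousConstSMul R M'] (T : M →ₗ[R] M') :
    DenseRange (T.codRestrict (range T).topologicalClosure
      fun x ↦ le_topologicalClosure _ (mem_range_self T x)) := by
  refine Subtype.dense_iff.mpr ?_
  rw [← Set.range_comp]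
  exact (topologicalClosure_coe _).subset

variable {𝕜 E F G : Type*} [RCLike 𝕜] [AddCommGroup E] [Module 𝕜 E]
  [NormedAddCommGroup G] [InnerProductSpace 𝕜 G] [CompleteSpace G]
  [NormedAddCommGroup F] [NormedSpace 𝕜 F] [CompleteSpace F]

theorem exists_contraction_comp_eq_of_norm_le (S : E →ₗ[𝕜] F) (T : E →ₗ[𝕜] G)
    (h : ∀ x, ‖S x‖ ≤ ‖T x‖) :
    ∃ D : G →L[𝕜] F, ‖D‖ ≤ 1 ∧ (∀ x, D (T x) = S x) ∧ (range T)ᗮ ≤ D.ker := by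
  set K := (range T).topologicalClosure
  set e : E →ₗ[𝕜] K := T.codRestrict K fun x ↦ le_topologicalClosure _ (mem_range_self T x)
  have he := T.denseRange_codRestrict_topologicalClosure
  have hSe : ∀ x, ‖S x‖ ≤ 1 * ‖e x‖ := fun x ↦ (one_mul ‖T x‖).symm ▸ h x
  refine ⟨S.extendOfNorm e ∘L K.orthogonalProjectionOnto, ?_, fun x ↦ ?_, fun w hw ↦ ?_⟩
  · calc _ ≤ ‖S.extendOfNorm e‖ * ‖K.orthogonalProjectionOnto‖ := opNorm_comp_le _ _
      _ ≤ 1 * 1 := by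
        gcongr
        exacts [opNorm_extendOfNorm_le he zero_le_one hSe, K.orthogonalProjectionOnto_norm_le]
      _ = 1 := one_mul 1
  · rw [ContinuousLinearMap.comp_apply, show T x = (e x : G) from rfl,
      orthogonalProjectionOnto_mem_subspace_eq_self, extendOfNorm_eq he ⟨1, hSe⟩]
  · rw [← orthogonal_closure] at hw
    show S.extendOfNorm e (K.orthogonalProjectionOnto w) = 0
    rw [orthogonalProjectionOnto_apply_of_mem_orthogonal hw, map_zero]

end LinearMap

namespace ContinuousLinearMap

open Submodule
open scoped InnerProduct

variable {𝕜 E F G : Type*} [RCLike 𝕜]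
  [NormedAddCommGroup E] [InnerProductSpace 𝕜 E] [CompleteSpace E]
  [NormedAddCommGroup F] [InnerProductSpace 𝕜 F] [CompleteSpace F]

theorem range_adjoint_le_topologicalClosure_of_orthogonal_le_ker {D : E →L[𝕜] F}
    {p : Submodule 𝕜 E} (h : pᗮ ≤ D.ker) : D†.range ≤ p.topologicalClosure := by
  rw [← orthogonal_orthogonal_eq_closure]
  exact (le_topologicalClosure _).trans (D.orthogonal_ker ▸ orthogonal_le h)

theorem ker_inf_topologicalClosure_range_adjoint (B : E →L[𝕜] F) :
    B.ker ⊓ B†.range.topologicalClosure = ⊥ := by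
  rw [← B.orthogonal_ker]
  exact B.ker.inf_orthogonal_eq_bot

variable [NormedAddCommGroup G] [InnerProductSpace 𝕜 G] [CompleteSpace G]

theorem norm_apply_le_of_adjoint_comp_self_le {S : E →L[𝕜] F} {T : E →L[𝕜] G}
    (h : S† ∘L S ≤ T† ∘L T) (x : E) : ‖S x‖ ≤ ‖T x‖ := by
  have hsq : ‖S x‖ ^ 2 ≤ ‖T x‖ ^ 2 := by
    have := ((le_def _ _).mp h).re_inner_nonneg_left x
    rw [sub_apply, inner_sub_left, map_sub, sub_nonneg] at this
    rwa [apply_norm_sq_eq_inner_adjoint_left, apply_norm_sq_eq_inner_adjoint_left]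
  exact pow_le_pow_iff_left₀ (norm_nonneg _) (norm_nonneg _) two_ne_zero |>.mp hsq

theorem exists_eq_comp_of_comp_adjoint_le {A : E →L[𝕜] G} {B : F →L[𝕜] G}
    (h : A ∘L A† ≤ B ∘L B†) :
    ∃ C : E →L[𝕜] F, A = B ∘L C ∧ ‖C‖ ≤ 1 ∧ C.ker = A.ker ∧
      C.range ≤ B†.range.topologicalClosure := by
  have hnorm : ∀ y, ‖(A†) y‖ ≤ ‖(B†) y‖ :=
    norm_apply_le_of_adjoint_comp_self_le (by rwa [adjoint_adjoint, adjoint_adjoint])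
  obtain ⟨D, hD_norm, hD_apply, hD_ker⟩ :=
    LinearMap.exists_contraction_comp_eq_of_norm_le (A† : G →ₗ[𝕜] E) (B† : G →ₗ[𝕜] F) hnorm
  have hA : A† = D ∘L B† := ext fun y ↦ (hD_apply y).symm
  have hBD : A = B ∘L D† := by rw [← adjoint_adjoint A, hA, adjoint_comp, adjoint_adjoint]
  have hrange := range_adjoint_le_topologicalClosure_of_orthogonal_le_ker hD_ker
  refine ⟨D†, hBD, by rwa [LinearIsometryEquiv.norm_map], le_antisymm ?_ fun x hx ↦ ?_, hrange⟩
  · exact hBD ▸ LinearMap.ker_le_ker_comp _ _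
  · have hx' : (D†) x ∈ B.ker ⊓ B†.range.topologicalClosure :=
      ⟨by simpa [hBD] using hx, hrange (LinearMap.mem_range_self _ x)⟩
    rwa [ker_inf_topologicalClosure_range_adjoint, mem_bot] at hx'

end ContinuousLinearMap

/-- Douglas' Lemma: if `A A* ≤ B B*` in the Loewner order on `B(H)`, then there is a
contraction `C` with `A = B C`, `ker C = ker A`, and the range of `C` contained in the
closure of the range of `B*`. -/
theorem douglas_lemma {H : Type*} [NormedAddCommGroup H] [InnerProductSpace ℂ H]
    [CompleteSpace H] (A B : H →L[ℂ] H) (h : A * star A ≤ B * star B) :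
    ∃ C : H →L[ℂ] H, A = B * C ∧ ‖C‖ ≤ 1 ∧
      LinearMap.ker (C : H →ₗ[ℂ] H) = LinearMap.ker (A : H →ₗ[ℂ] H) ∧
      (LinearMap.range (C : H →ₗ[ℂ] H) : Set H) ⊆ closure (LinearMap.range ((star B : H →L[ℂ] H) : H →ₗ[ℂ] H) : Set H) := by
  rw [ContinuousLinearMap.star_eq_adjoint, ContinuousLinearMap.star_eq_adjoint] at h
  obtain ⟨C, hBC, hC_norm, hC_ker, hC_range⟩ :=
    ContinuousLinearMap.exists_eq_comp_of_comp_adjoint_le h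
  rw [ContinuousLinearMap.star_eq_adjoint, ← Submodule.topologicalClosure_coe]
  exact ⟨C, hBC, hC_norm, hC_ker, hC_range⟩
end

section
/- Let ν : Borel(X) → B(H) be a quantum probability measure (ν(X) = I) with ν = ν₁ + ⋯ + ν_n for POVMs ν_i. Then there exist quantum probability measures γ_i : Borel(X) → B(H) such that ν(E) = Σ_{i=1}^n ν_i(X)^{1/2} γ_i(E) ν_i(X)^{1/2} for all Borel E; in particular, note Σ_i ν_i(X) = I, so this is a C*-convex combination. -/
/-!
Fix `i`, and let `T = νᵢ(X)`, `S = √T`. Since `0 ≤ νᵢ(E) ≤ T`, Douglas' lemma factors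
`√(νᵢ(E)) = C_E S` through a contraction `C_E` vanishing on `(range S)ᗮ`, so `D(E) = C_E⋆ C_E`
satisfies `S D(E) S = νᵢ(E)`, `‖D(E)‖ ≤ 1`, and lives on `closure (range S)`. Such an operator is
unique, which makes `D` finitely additive with `D(X)` the projection `P` onto `closure (range S)`;
the uniform bound carries weak countable additivity from `range S`, where it is that of `νᵢ`, to
all of `H`. Then `γᵢ(E) = D(E) + (1 - P) ν(E) (1 - P)` has total mass `P + (1 - P) = 1`, and `S`
kills the second term.
-/

open scoped InnerProductSpace
open MeasureTheory

/-- A positive operator valued measure on the measurable sets of `X` with values in the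
bounded operators on `H`: it is zero on `∅`, takes positive semidefinite values, and is
weakly countably additive. -/
structure POVM (X : Type*) [MeasurableSpace X] (H : Type*) [NormedAddCommGroup H]
    [InnerProductSpace ℂ H] [CompleteSpace H] where
  toFun : Set X → (H →L[ℂ] H)
  empty' : toFun ∅ = 0
  pos' : ∀ E : Set X, MeasurableSet E → 0 ≤ toFun E
  additive' : ∀ E : ℕ → Set X, (∀ n, MeasurableSet (E n)) →
    Pairwise (Function.onFun Disjoint E) →
    ∀ x y : H, HasSum (fun n => ⟪toFun (E n) x, y⟫_ℂ) ⟪toFun (⋃ n, E n) x, y⟫_ℂ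

open Filter Topology

namespace ContinuousLinearMap

section Tendsto

variable {ι 𝕜 E F : Type*}

theorem tendsto_apply_of_mem_closure {𝕜₂ : Type*} [NontriviallyNormedField 𝕜]
    [NontriviallyNormedField 𝕜₂] {σ : 𝕜 →+* 𝕜₂} [RingHomIsometric σ]
    [SeminormedAddCommGroup E] [NormedSpace 𝕜 E] [SeminormedAddCommGroup F] [NormedSpace 𝕜₂ F]
    {l : Filter ι} {T : ι → E →SL[σ] F} (hT : ∃ C, ∀ i, ‖T i‖ ≤ C) {f : E → F}
    (hf : Continuous f) {s : Set E} (h : ∀ x ∈ s, Tendsto (T · x) l (𝓝 (f x))) {x : E}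
    (hx : x ∈ closure s) : Tendsto (T · x) l (𝓝 (f x)) := by
  have hT' : Equicontinuous ((↑) ∘ T) := ((NormedSpace.equicontinuous_TFAE T).out 5 1).mp hT
  exact closure_minimal h (hT'.isClosed_setOfPred_tendsto hf) hx

theorem tendsto_inner_apply_of_mem_closure [RCLike 𝕜] [NormedAddCommGroup E] [NormedSpace 𝕜 E]
    [NormedAddCommGroup F] [InnerProductSpace 𝕜 F] {l : Filter ι} {A : ι → E →L[𝕜] F}
    {A₀ : E →L[𝕜] F} {C : ℝ} (hA : ∀ i, ‖A i‖ ≤ C) {s : Set E} {t : Set F}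
    (h : ∀ x ∈ s, ∀ y ∈ t, Tendsto (fun i => ⟪A i x, y⟫_𝕜) l (𝓝 ⟪A₀ x, y⟫_𝕜))
    {x : E} {y : F} (hx : x ∈ closure s) (hy : y ∈ closure t) :
    Tendsto (fun i => ⟪A i x, y⟫_𝕜) l (𝓝 ⟪A₀ x, y⟫_𝕜) := by
  have hx' : ∀ y ∈ t, Tendsto (fun i => ⟪A i x, y⟫_𝕜) l (𝓝 ⟪A₀ x, y⟫_𝕜) := fun y hy =>
    tendsto_apply_of_mem_closure (T := fun i => (innerSLFlip 𝕜 y).comp (A i))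
      ⟨‖innerSLFlip 𝕜 y‖ * C, fun i => (opNorm_comp_le _ _).trans (by gcongr; exact hA i)⟩
      (by fun_prop) (fun x hx => h x hx y hy) hx
  refine tendsto_apply_of_mem_closure (T := fun i => innerSL 𝕜 (A i x))
    ⟨C * ‖x‖, fun i => ?_⟩ (by fun_prop) hx' hy
  rw [innerSL_apply_norm]
  exact (A i).le_of_opNorm_le (hA i) x

end Tendsto

section RangeProjection

variable {𝕜 E F G : Type*} [RCLike 𝕜] [NormedAddCommGroup E] [NormedSpace 𝕜 E]
  [NormedAddCommGroup F] [InnerProductSpace 𝕜 F] [CompleteSpace F]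

noncomputable def rangeProjection (S : E →L[𝕜] F) : F →L[𝕜] F :=
  (LinearMap.range (S : E →ₗ[𝕜] F)).topologicalClosure.starProjection

theorem isStarProjection_rangeProjection (S : E →L[𝕜] F) : IsStarProjection S.rangeProjection :=
  isStarProjection_starProjection

theorem rangeProjection_apply_mem_closure (S : E →L[𝕜] F) (x : F) :
    S.rangeProjection x ∈ closure (Set.range S) := by
  have := (LinearMap.range (S : E →ₗ[𝕜] F)).topologicalClosure.starProjection_apply_mem x
  rwa [← SetLike.mem_coe, Submodule.topologicalClosure_coe, LinearMap.coe_range] at this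

theorem rangeProjection_comp_self (S : E →L[𝕜] F) : S.rangeProjection ∘L S = S := by
  ext x
  exact Submodule.starProjection_eq_self_iff.mpr
    (Submodule.le_topologicalClosure _ (LinearMap.mem_range_self _ x))

/-- Douglas' factorization lemma. -/
theorem exists_comp_eq_of_norm_apply_le [NormedAddCommGroup G] [NormedSpace 𝕜 G] [CompleteSpace G]
    {S : E →L[𝕜] F} {R : E →L[𝕜] G} (h : ∀ x, ‖R x‖ ≤ ‖S x‖) :
    ∃ C : F →L[𝕜] G, ‖C‖ ≤ 1 ∧ C ∘L S = R ∧ C ∘L S.rangeProjection = C := by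
  set K := (LinearMap.range (S : E →ₗ[𝕜] F)).topologicalClosure
  have hSK : ∀ x, S x ∈ K := fun x =>
    Submodule.le_topologicalClosure _ (LinearMap.mem_range_self _ x)
  let S' : E →ₗ[𝕜] K := (S : E →ₗ[𝕜] F).codRestrict K hSK
  have hdense : DenseRange S' := by
    rw [DenseRange, Subtype.dense_iff]
    refine (Submodule.topologicalClosure_coe _).subset.trans (closure_mono ?_)
    rintro _ ⟨x, rfl⟩
    exact ⟨S' x, ⟨x, rfl⟩, rfl⟩
  have hbound : ∀ x, ‖(R : E →ₗ[𝕜] G) x‖ ≤ 1 * ‖S' x‖ := fun x => by rw [one_mul]; exact h x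
  set C₀ := (R : E →ₗ[𝕜] G).extendOfNorm S'
  have hC₀ : ∀ x, C₀ (S' x) = R x := LinearMap.extendOfNorm_eq hdense ⟨1, hbound⟩
  refine ⟨C₀ ∘L K.orthogonalProjectionOnto, ?_, ?_, ?_⟩
  · calc _ ≤ ‖C₀‖ * ‖K.orthogonalProjectionOnto‖ := opNorm_comp_le _ _
      _ ≤ 1 * 1 := by
        gcongr
        exacts [LinearMap.opNorm_extendOfNorm_le hdense zero_le_one hbound,
          K.orthogonalProjectionOnto_norm_le]
      _ = 1 := one_mul 1
  · ext x
    exact (congrArg C₀ (K.orthogonalProjectionOnto_mem_subspace_eq_self (S' x))).trans (hC₀ x)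
  · ext x
    simp only [comp_apply, rangeProjection, Submodule.starProjection_apply,
      Submodule.orthogonalProjectionOnto_mem_subspace_eq_self]
    rfl

end RangeProjection

section Compression

variable {𝕜 H : Type*} [RCLike 𝕜] [NormedAddCommGroup H] [InnerProductSpace 𝕜 H] [CompleteSpace H]

theorem inner_star_mul_mul_apply (S A : H →L[𝕜] H) (u v : H) :
    ⟪(star S * A * S) u, v⟫_𝕜 = ⟪A (S u), S v⟫_𝕜 := by
  rw [star_eq_adjoint, mul_apply_eq_comp, mul_apply_eq_comp, adjoint_inner_left]

theorem inner_apply_eq_inner_apply_rangeProjection {S A : H →L[𝕜] H}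
    (hA : S.rangeProjection * A * S.rangeProjection = A) (x y : H) :
    ⟪A x, y⟫_𝕜 = ⟪A (S.rangeProjection x), S.rangeProjection y⟫_𝕜 := by
  conv_lhs => rw [← hA]
  exact Submodule.inner_starProjection_left_eq_right _ _ _

theorem eq_of_star_mul_mul_eq {S A B : H →L[𝕜] H}
    (hA : S.rangeProjection * A * S.rangeProjection = A)
    (hB : S.rangeProjection * B * S.rangeProjection = B)
    (h : star S * A * S = star S * B * S) : A = B := by
  have hrange : Set.range S ×ˢ Set.range S ⊆ {p : H × H | ⟪A p.1, p.2⟫_𝕜 = ⟪B p.1, p.2⟫_𝕜} := by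
    rintro ⟨_, _⟩ ⟨⟨u, rfl⟩, ⟨v, rfl⟩⟩
    simp only [Set.mem_ofPred_eq, ← inner_star_mul_mul_apply, h]
  have hclosure := closure_minimal hrange (isClosed_eq (by fun_prop) (by fun_prop))
  rw [closure_prod_eq] at hclosure
  ext x
  refine ext_inner_right 𝕜 fun y => ?_
  rw [inner_apply_eq_inner_apply_rangeProjection hA, inner_apply_eq_inner_apply_rangeProjection hB]
  exact hclosure (Set.mk_mem_prod (rangeProjection_apply_mem_closure S x)
    (rangeProjection_apply_mem_closure S y))

theorem norm_apply_le_of_star_mul_self_le {R S : H →L[𝕜] H} (h : star R * R ≤ star S * S)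
    (x : H) : ‖R x‖ ≤ ‖S x‖ := by
  have h' := ((le_def _ _).mp h).re_inner_nonneg_left x
  rw [sub_apply, inner_sub_left, map_sub, sub_nonneg, star_eq_adjoint, star_eq_adjoint] at h'
  rw [← sq_le_sq₀ (norm_nonneg _) (norm_nonneg _), apply_norm_sq_eq_inner_adjoint_left,
    apply_norm_sq_eq_inner_adjoint_left]
  exact h'

end Compression

end ContinuousLinearMap

theorem CFC.star_sqrt_mul_sqrt {A : Type*} [CStarAlgebra A] [PartialOrder A] [StarOrderedRing A]
    {a : A} (ha : 0 ≤ a) : star (CFC.sqrt a) * CFC.sqrt a = a := by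
  rw [(CFC.sqrt_nonneg a).isSelfAdjoint.star_eq, CFC.sqrt_mul_sqrt_self a ha]

section Sqrt

open ContinuousLinearMap CFC

variable {H : Type*} [NormedAddCommGroup H] [InnerProductSpace ℂ H] [CompleteSpace H]

theorem exists_sqrt_mul_mul_sqrt_eq_of_le {A T : H →L[ℂ] H} (hA : 0 ≤ A) (hAT : A ≤ T) :
    ∃ D : H →L[ℂ] H, 0 ≤ D ∧ ‖D‖ ≤ 1 ∧
      (CFC.sqrt T).rangeProjection * D * (CFC.sqrt T).rangeProjection = D ∧
      CFC.sqrt T * D * CFC.sqrt T = A := by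
  obtain ⟨C, hC, hCS, hCP⟩ := exists_comp_eq_of_norm_apply_le
    (norm_apply_le_of_star_mul_self_le (R := CFC.sqrt A) (S := CFC.sqrt T)
      (by rwa [star_sqrt_mul_sqrt hA, star_sqrt_mul_sqrt (hA.trans hAT)]))
  rw [← mul_def] at hCS hCP
  refine ⟨star C * C, star_mul_self_nonneg C, ?_, ?_, ?_⟩
  · rw [CStarRing.norm_star_mul_self]
    exact mul_le_one₀ hC (norm_nonneg _) hC
  · calc _ = star (C * (CFC.sqrt T).rangeProjection) * (C * (CFC.sqrt T).rangeProjection) := by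
          rw [star_mul, (isStarProjection_rangeProjection _).isSelfAdjoint.star_eq]
          simp only [mul_assoc]
      _ = star C * C := by rw [hCP]
  · calc _ = star (C * CFC.sqrt T) * (C * CFC.sqrt T) := by
          rw [star_mul, (CFC.sqrt_nonneg T).isSelfAdjoint.star_eq]
          simp only [mul_assoc]
      _ = A := by rw [hCS, star_sqrt_mul_sqrt hA]

end Sqrt

namespace POVM

open ContinuousLinearMap

variable {X : Type*} [MeasurableSpace X]
  {H : Type*} [NormedAddCommGroup H] [InnerProductSpace ℂ H] [CompleteSpace H]

theorem toFun_biUnion_finset (μ : POVM X H) {E : ℕ → Set X} (hE : ∀ n, MeasurableSet (E n))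
    (hd : Pairwise (Function.onFun Disjoint E)) (s : Finset ℕ) :
    μ.toFun (⋃ n ∈ s, E n) = ∑ n ∈ s, μ.toFun (E n) := by
  classical
  set F : ℕ → Set X := fun n => if n ∈ s then E n else ∅
  have hF : ∀ n, MeasurableSet (F n) := fun n => by
    simp only [F]; split_ifs; exacts [hE n, .empty]
  have hFd : Pairwise (Function.onFun Disjoint F) := fun i j hij => by
    simp only [Function.onFun, F]; split_ifs <;> simp [hd hij]
  have hFU : ⋃ n, F n = ⋃ n ∈ s, E n := by
    ext p; simp [F]
  ext x
  refine ext_inner_right ℂ fun y => ?_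
  have hsum := μ.additive' F hF hFd x y
  rw [hFU] at hsum
  rw [hsum.unique (hasSum_sum_of_ne_finset_zero (s := s) fun n hn => by simp [F, hn, μ.empty']),
    sum_apply, sum_inner]
  exact Finset.sum_congr rfl fun n hn => by simp [F, hn]

theorem toFun_union (μ : POVM X H) {A B : Set X} (hA : MeasurableSet A) (hB : MeasurableSet B)
    (hAB : Disjoint A B) : μ.toFun (A ∪ B) = μ.toFun A + μ.toFun B := by
  set E : ℕ → Set X := fun n => if n = 0 then A else if n = 1 then B else ∅
  have hE : ∀ n, MeasurableSet (E n) := fun n => by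
    simp only [E]; split_ifs; exacts [hA, hB, .empty]
  have hd : Pairwise (Function.onFun Disjoint E) := fun i j hij => by
    simp only [Function.onFun, E]; split_ifs <;> simp_all [hAB.symm]
  simpa [E] using μ.toFun_biUnion_finset hE hd {0, 1}

theorem toFun_le_univ (μ : POVM X H) {A : Set X} (hA : MeasurableSet A) :
    μ.toFun A ≤ μ.toFun Set.univ := by
  rw [← Set.union_compl_self A, μ.toFun_union hA hA.compl disjoint_compl_right]
  exact le_add_of_nonneg_right (μ.pos' _ hA.compl)

instance : Add (POVM X H) where
  add μ ν :=
    { toFun := μ.toFun + ν.toFun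
      empty' := by simp [μ.empty', ν.empty']
      pos' := fun E hE => add_nonneg (μ.pos' E hE) (ν.pos' E hE)
      additive' := fun E hE hd x y => by
        simpa only [Pi.add_apply, add_apply, inner_add_left] using
          (μ.additive' E hE hd x y).add (ν.additive' E hE hd x y) }

@[simp]
theorem add_toFun (μ ν : POVM X H) : (μ + ν).toFun = μ.toFun + ν.toFun := rfl

noncomputable def conj (μ : POVM X H) (B : H →L[ℂ] H) : POVM X H where
  toFun E := star B * μ.toFun E * B
  empty' := by simp [μ.empty']
  pos' E hE := star_left_conjugate_nonneg (μ.pos' E hE) B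
  additive' E hE hd x y := by
    simpa only [inner_star_mul_mul_apply] using μ.additive' E hE hd (B x) (B y)

@[simp]
theorem conj_toFun (μ : POVM X H) (B : H →L[ℂ] H) (E : Set X) :
    (μ.conj B).toFun E = star B * μ.toFun E * B := rfl

section Lift

variable {μ : POVM X H} {S : H →L[ℂ] H} {D : Set X → H →L[ℂ] H}

theorem biUnion_finset_of_star_mul_mul_eq
    (hDP : ∀ E, MeasurableSet E → S.rangeProjection * D E * S.rangeProjection = D E)
    (hDS : ∀ E, MeasurableSet E → star S * D E * S = μ.toFun E)
    {E : ℕ → Set X} (hE : ∀ n, MeasurableSet (E n)) (hd : Pairwise (Function.onFun Disjoint E))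
    (s : Finset ℕ) : D (⋃ n ∈ s, E n) = ∑ n ∈ s, D (E n) := by
  have hs : MeasurableSet (⋃ n ∈ s, E n) := s.measurableSet_biUnion fun n _ => hE n
  refine eq_of_star_mul_mul_eq (hDP _ hs) ?_ ?_
  · simp only [Finset.mul_sum, Finset.sum_mul]
    exact Finset.sum_congr rfl fun n _ => hDP _ (hE n)
  · rw [hDS _ hs, μ.toFun_biUnion_finset hE hd, Finset.mul_sum, Finset.sum_mul]
    exact Finset.sum_congr rfl fun n _ => (hDS _ (hE n)).symm

/-- Weak countable additivity holds on `range S` because it does for `μ`; it extends to the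
closure of `range S`, where `D` lives, because the `D E` are uniformly bounded. -/
theorem hasSum_inner_of_star_mul_mul_eq (hD : ∀ E, MeasurableSet E → ‖D E‖ ≤ 1)
    (hDP : ∀ E, MeasurableSet E → S.rangeProjection * D E * S.rangeProjection = D E)
    (hDS : ∀ E, MeasurableSet E → star S * D E * S = μ.toFun E)
    {E : ℕ → Set X} (hE : ∀ n, MeasurableSet (E n)) (hd : Pairwise (Function.onFun Disjoint E))
    (x y : H) : HasSum (fun n => ⟪D (E n) x, y⟫_ℂ) ⟪D (⋃ n, E n) x, y⟫_ℂ := by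
  have hU := MeasurableSet.iUnion hE
  have hs (s : Finset ℕ) : MeasurableSet (⋃ n ∈ s, E n) :=
    s.measurableSet_biUnion fun n _ => hE n
  show Tendsto (fun s => ∑ n ∈ s, ⟪D (E n) x, y⟫_ℂ) atTop (𝓝 ⟪D (⋃ n, E n) x, y⟫_ℂ)
  simp_rw [← sum_inner, ← sum_apply, ← biUnion_finset_of_star_mul_mul_eq hDP hDS hE hd]
  have hP (F : Set X) (hF : MeasurableSet F) :=
    inner_apply_eq_inner_apply_rangeProjection (hDP F hF) x y
  rw [hP _ hU]
  refine (tendsto_congr fun s => hP _ (hs s)).mpr ?_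
  refine tendsto_inner_apply_of_mem_closure (fun s => hD _ (hs s)) ?_
    (rangeProjection_apply_mem_closure S x) (rangeProjection_apply_mem_closure S y)
  rintro _ ⟨u, rfl⟩ _ ⟨v, rfl⟩
  have hSD (F : Set X) (hF : MeasurableSet F) : ⟪D F (S u), S v⟫_ℂ = ⟪μ.toFun F u, v⟫_ℂ := by
    rw [← inner_star_mul_mul_apply, hDS F hF]
  rw [hSD _ hU]
  refine (tendsto_congr fun s => hSD _ (hs s)).mpr ?_
  simp_rw [μ.toFun_biUnion_finset hE hd, sum_apply, sum_inner]
  exact μ.additive' E hE hd u v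

end Lift

theorem exists_sqrt_mul_mul_sqrt_eq (μ : POVM X H) :
    ∃ δ : POVM X H, δ.toFun Set.univ = (CFC.sqrt (μ.toFun Set.univ)).rangeProjection ∧
      ∀ E, MeasurableSet E →
        CFC.sqrt (μ.toFun Set.univ) * δ.toFun E * CFC.sqrt (μ.toFun Set.univ) = μ.toFun E := by
  set S := CFC.sqrt (μ.toFun Set.univ)
  set P := S.rangeProjection
  have hS : star S = S := (CFC.sqrt_nonneg _).isSelfAdjoint.star_eq
  choose! D hD0 hD1 hDP hDS using fun E (hE : MeasurableSet E) =>
    exists_sqrt_mul_mul_sqrt_eq_of_le (μ.pos' E hE) (μ.toFun_le_univ hE)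
  have hDS' (E : Set X) (hE : MeasurableSet E) : star S * D E * S = μ.toFun E := by
    rw [hS, hDS E hE]
  have hD_empty : D ∅ = 0 := eq_of_star_mul_mul_eq (hDP _ .empty) (by simp)
    (by rw [hDS' _ .empty, μ.empty', mul_zero, zero_mul])
  have hPP : P * P = P := (isStarProjection_rangeProjection S).isIdempotentElem.eq
  have hSP : S * P = S := by
    have := congrArg star (show P * S = S from rangeProjection_comp_self S)
    rwa [star_mul, hS, (isStarProjection_rangeProjection S).isSelfAdjoint.star_eq] at this
  have hD_univ : D Set.univ = P := by
    refine eq_of_star_mul_mul_eq (hDP _ .univ) (by rw [hPP, hPP]) ?_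
    rw [hDS' _ .univ, hS, hSP, CFC.sqrt_mul_sqrt_self _ (μ.pos' _ .univ)]
  exact ⟨⟨D, hD_empty, hD0, fun E hE hd => hasSum_inner_of_star_mul_mul_eq hD1 hDP hDS' hE hd⟩,
    hD_univ, hDS⟩

theorem exists_toFun_univ_eq_one_and_sqrt_mul_mul_sqrt_eq (μ ρ : POVM X H)
    (hρ : ρ.toFun Set.univ = 1) :
    ∃ γ : POVM X H, γ.toFun Set.univ = 1 ∧ ∀ E, MeasurableSet E →
      CFC.sqrt (μ.toFun Set.univ) * γ.toFun E * CFC.sqrt (μ.toFun Set.univ) = μ.toFun E := by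
  obtain ⟨δ, hδ, hδμ⟩ := μ.exists_sqrt_mul_mul_sqrt_eq
  set S := CFC.sqrt (μ.toFun Set.univ)
  set Q := 1 - S.rangeProjection
  have hQ : IsStarProjection Q := (isStarProjection_rangeProjection S).one_sub
  have hQS : Q * S = 0 := by
    rw [sub_mul, one_mul, show S.rangeProjection * S = S from rangeProjection_comp_self S, sub_self]
  refine ⟨δ + ρ.conj Q, ?_, fun E hE => ?_⟩
  · rw [add_toFun, Pi.add_apply, conj_toFun, hδ, hρ, mul_one, hQ.isSelfAdjoint.star_eq,
      hQ.isIdempotentElem.eq, add_sub_cancel]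
  · have hS : star S = S := (CFC.sqrt_nonneg _).isSelfAdjoint.star_eq
    calc S * (δ + ρ.conj Q).toFun E * S
        = S * δ.toFun E * S + star (Q * S) * ρ.toFun E * (Q * S) := by
          rw [add_toFun, Pi.add_apply, conj_toFun, star_mul, hS]; noncomm_ring
      _ = μ.toFun E := by rw [hδμ E hE, hQS, star_zero, zero_mul, zero_mul, add_zero]

end POVM

/-- If a quantum probability measure `ν` decomposes as `ν = ν₁ + ⋯ + ν_n` for POVMs `ν_i`,
then there are quantum probability measures `γ_i` with
`ν(E) = Σ_i ν_i(X)^{1/2} γ_i(E) ν_i(X)^{1/2}`, a C*-convex combination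
(indeed `Σ_i ν_i(X) = I`). -/
theorem quantum_probability_measure_cstar_convex_decomposition {X : Type*} [MeasurableSpace X]
    {H : Type*} [NormedAddCommGroup H] [InnerProductSpace ℂ H] [CompleteSpace H]
    {n : ℕ} (ν : POVM X H) (νs : Fin n → POVM X H)
    (hν1 : ν.toFun Set.univ = 1)
    (hsum : ∀ E : Set X, MeasurableSet E → ν.toFun E = ∑ i, (νs i).toFun E) :
    (∑ i, (νs i).toFun Set.univ = 1) ∧
    ∃ γ : Fin n → POVM X H, (∀ i, (γ i).toFun Set.univ = 1) ∧
      ∀ E : Set X, MeasurableSet E →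
        ν.toFun E = ∑ i, CFC.sqrt ((νs i).toFun Set.univ) * (γ i).toFun E *
          CFC.sqrt ((νs i).toFun Set.univ) := by
  refine ⟨(hsum _ .univ).symm.trans hν1, ?_⟩
  choose γ hγ hγν using fun i => (νs i).exists_toFun_univ_eq_one_and_sqrt_mul_mul_sqrt_eq ν hν1
  exact ⟨γ, hγ, fun E hE => (hsum E hE).trans (Finset.sum_congr rfl fun i _ => (hγν i E hE).symm)⟩
end

section
/- Every POVM ν : Borel(X) → B(H) can be written uniquely as ν = ν_a + ν_na where ν_a is an atomic POVM and ν_na is a nonatomic POVM. -/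
open scoped InnerProductSpace
open MeasureTheory

/-- `A` is an atom of the POVM `ν`: a measurable set of nonzero measure each of whose
measurable subsets has measure `0` or measure `ν(A)`. -/
def POVM.IsAtomOf {X : Type*} [MeasurableSpace X] {H : Type*} [NormedAddCommGroup H]
    [InnerProductSpace ℂ H] [CompleteSpace H] (ν : POVM X H) (A : Set X) : Prop :=
  MeasurableSet A ∧ ν.toFun A ≠ 0 ∧
    ∀ B : Set X, B ⊆ A → MeasurableSet B → ν.toFun B = 0 ∨ ν.toFun B = ν.toFun A

/-- A POVM is atomic if every measurable set of nonzero measure contains an atom. -/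
def POVM.Atomic {X : Type*} [MeasurableSpace X] {H : Type*} [NormedAddCommGroup H]
    [InnerProductSpace ℂ H] [CompleteSpace H] (ν : POVM X H) : Prop :=
  ∀ E : Set X, MeasurableSet E → ν.toFun E ≠ 0 → ∃ A : Set X, A ⊆ E ∧ ν.IsAtomOf A

/-- A POVM is nonatomic if it has no atoms. -/
def POVM.Nonatomic {X : Type*} [MeasurableSpace X] {H : Type*} [NormedAddCommGroup H]
    [InnerProductSpace ℂ H] [CompleteSpace H] (ν : POVM X H) : Prop :=
  ∀ A : Set X, ¬ ν.IsAtomOf A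

/-!
A POVM `ν` on a separable Hilbert space has the same null sets as a finite measure `μ`, built from
the quadratic forms `E ↦ ⟪ν(E) x, x⟫` at a dense sequence of vectors `x`, so the atoms of `ν` are
those of `μ`. Since `μ` is finite, a countable union `S` of atoms of `μ` can be chosen maximal,
so that `Sᶜ` contains no atom, and `ν = ν(· ∩ S) + ν(· ∩ Sᶜ)` is the decomposition.
In any decomposition both parts vanish on the null sets of `ν`. The nonatomic part then
vanishes on every atom of `ν`, hence on `S`; the atomic part vanishes on `Sᶜ`, because every atom
of it contains an atom of `μ`: remove from it a maximal subset that is null for the part.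
-/

open Set

namespace MeasureTheory.Measure

variable {X : Type*} [MeasurableSpace X] {μ ρ : Measure X} {A C F : Set X} {s : Set (Set X)}

def IsAtom (μ : Measure X) (A : Set X) : Prop :=
  MeasurableSet A ∧ μ A ≠ 0 ∧ ∀ B ⊆ A, MeasurableSet B → μ B = 0 ∨ μ (A \ B) = 0

lemma IsAtom.of_subset (hA : μ.IsAtom A) (hCA : C ⊆ A) (hC : MeasurableSet C) (hμC : μ C ≠ 0) :
    μ.IsAtom C := by
  refine ⟨hC, hμC, fun B hBC hB => (hA.2.2 B (hBC.trans hCA) hB).imp_right fun h => ?_⟩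
  exact measure_mono_null (sdiff_subset_sdiff_left hCA) h

lemma IsAtom.of_absolutelyContinuous (hρμ : ρ ≪ μ) (hA : μ.IsAtom A) (hρA : ρ A ≠ 0) :
    ρ.IsAtom A :=
  ⟨hA.1, hρA, fun B hBA hB => (hA.2.2 B hBA hB).imp (@hρμ _) (@hρμ _)⟩

lemma exists_mem_measure_inter_ne_zero (hs : s.Countable) (hF : μ (F ∩ ⋃₀ s) ≠ 0) :
    ∃ A ∈ s, μ (F ∩ A) ≠ 0 := by
  rw [sUnion_eq_biUnion, inter_iUnion₂] at hF
  by_contra! h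
  exact hF ((measure_biUnion_null_iff hs).2 h)

lemma exists_forall_measure_sdiff_eq_zero_of_sUnion [IsFiniteMeasure μ] (p : Set X → Prop)
    (hp_meas : ∀ T, p T → MeasurableSet T)
    (hp_sUnion : ∀ 𝒯 : Set (Set X), 𝒯.Countable → (∀ T ∈ 𝒯, p T) → p (⋃₀ 𝒯)) :
    ∃ S, p S ∧ ∀ T, p T → μ (T \ S) = 0 := by
  have hp_empty : p ∅ := by simpa using hp_sUnion ∅ countable_empty (by simp)
  obtain ⟨u, -, hu_lim, hu_mem⟩ := exists_seq_tendsto_sSup (S := μ '' {T | p T})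
    ⟨_, mem_image_of_mem μ hp_empty⟩ (OrderTop.bddAbove _)
  choose U hU hμU using hu_mem
  have hS : p (⋃₀ range U) := hp_sUnion _ (countable_range U) (forall_mem_range.2 hU)
  have hμS : μ (⋃₀ range U) = sSup (μ '' {T | p T}) := by
    refine le_antisymm (le_sSup (mem_image_of_mem μ hS)) (le_of_tendsto' hu_lim fun n => ?_)
    rw [← hμU n]
    exact measure_mono (subset_sUnion_of_mem (mem_range_self n))
  refine ⟨_, hS, fun T hT => ?_⟩
  have hST : p (⋃₀ range U ∪ T) := by
    rw [← sUnion_pair]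
    exact hp_sUnion _ ((countable_singleton T).insert _) (by rintro _ (rfl | rfl) <;> assumption)
  have : μ (⋃₀ range U) + μ (T \ ⋃₀ range U) ≤ μ (⋃₀ range U) + 0 := by
    rw [← measure_union' disjoint_sdiff_right (hp_meas _ hS), union_sdiff_self, add_zero, hμS]
    exact le_sSup (mem_image_of_mem μ hST)
  exact nonpos_iff_eq_zero.1 (ENNReal.le_of_add_le_add_left (measure_ne_top _ _) this)

lemma IsAtom.exists_isAtom_subset [IsFiniteMeasure μ] (hρμ : ρ ≪ μ) (hA : ρ.IsAtom A) :
    ∃ B ⊆ A, μ.IsAtom B := by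
  obtain ⟨N, ⟨hNA, hN, hρN⟩, hN_max⟩ := exists_forall_measure_sdiff_eq_zero_of_sUnion (μ := μ)
    (fun N => N ⊆ A ∧ MeasurableSet N ∧ ρ N = 0) (fun _ h => h.2.1) fun 𝒯 h𝒯 h =>
      ⟨sUnion_subset fun T hT => (h T hT).1, .sUnion h𝒯 fun T hT => (h T hT).2.1,
        (measure_sUnion_null_iff h𝒯).2 fun T hT => (h T hT).2.2⟩
  obtain ⟨hAm, hρA, hA⟩ := hA
  refine ⟨A \ N, sdiff_subset, hAm.diff hN, fun h => hρA ?_, fun D hD hDm => ?_⟩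
  · rw [← measure_sdiff_null hρN]
    exact hρμ h
  rcases hA D (hD.trans sdiff_subset) hDm with hρD | hρAD
  · left
    refine measure_mono_null (subset_sdiff.2 ⟨subset_union_right, (subset_sdiff.1 hD).2⟩)
      (hN_max (N ∪ D) ?_)
    exact ⟨union_subset hNA (hD.trans sdiff_subset), hN.union hDm, measure_union_null hρN hρD⟩
  · right
    rw [sdiff_sdiff_comm]
    exact hN_max (A \ D) ⟨sdiff_subset, hAm.diff hDm, hρAD⟩

lemma exists_countable_isAtom_forall_not_subset_compl [IsFiniteMeasure μ] :
    ∃ s : Set (Set X), s.Countable ∧ (∀ A ∈ s, μ.IsAtom A) ∧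
      ∀ A, μ.IsAtom A → ¬ A ⊆ (⋃₀ s)ᶜ := by
  obtain ⟨S, ⟨s, hs, hs_atom, rfl⟩, hS_max⟩ :=
    exists_forall_measure_sdiff_eq_zero_of_sUnion (μ := μ)
    (fun S => ∃ s : Set (Set X), s.Countable ∧ (∀ A ∈ s, μ.IsAtom A) ∧ ⋃₀ s = S)
    (by rintro _ ⟨s, hs, hs_atom, rfl⟩; exact .sUnion hs fun A hA => (hs_atom A hA).1)
    (by
      intro 𝒯 h𝒯 h
      choose! s hs hs_atom hs_eq using h
      refine ⟨⋃ T ∈ 𝒯, s T, h𝒯.biUnion hs, fun A hA => ?_, ?_⟩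
      · obtain ⟨T, hT, hAT⟩ := mem_iUnion₂.1 hA
        exact hs_atom T hT A hAT
      · calc ⋃₀ ⋃ T ∈ 𝒯, s T = ⋃ T ∈ 𝒯, ⋃₀ s T := by simp only [sUnion_iUnion]
          _ = ⋃₀ 𝒯 := by rw [sUnion_eq_biUnion]; exact iUnion₂_congr hs_eq)
  refine ⟨s, hs, hs_atom, fun A hA hAs => hA.2.1 ?_⟩
  refine measure_mono_null (subset_sdiff.2 ⟨subset_rfl, subset_compl_iff_disjoint_right.1 hAs⟩)
    (hS_max A ?_)
  exact ⟨{A}, countable_singleton A, by simpa using hA, sUnion_singleton A⟩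

lemma measure_eq_zero_of_subset_sUnion_isAtom (hρμ : ρ ≪ μ) (hρ : ∀ A, ¬ ρ.IsAtom A)
    (hs : s.Countable) (hs_atom : ∀ A ∈ s, μ.IsAtom A) (hF : MeasurableSet F)
    (hFs : F ⊆ ⋃₀ s) : ρ F = 0 := by
  by_contra hρF
  rw [← inter_eq_left.2 hFs] at hρF
  obtain ⟨A, hA, hρFA⟩ := exists_mem_measure_inter_ne_zero hs hρF
  have hFA : μ.IsAtom (F ∩ A) :=
    (hs_atom A hA).of_subset inter_subset_right (hF.inter (hs_atom A hA).1) fun h => hρFA (hρμ h)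
  exact hρ _ (hFA.of_absolutelyContinuous hρμ hρFA)

lemma measure_eq_zero_of_forall_not_isAtom_subset [IsFiniteMeasure μ] (hρμ : ρ ≪ μ)
    (hρ : ∀ E, MeasurableSet E → ρ E ≠ 0 → ∃ A ⊆ E, ρ.IsAtom A) (hF : MeasurableSet F)
    (hFμ : ∀ A ⊆ F, ¬ μ.IsAtom A) : ρ F = 0 := by
  by_contra hρF
  obtain ⟨A, hAF, hA⟩ := hρ F hF hρF
  obtain ⟨B, hBA, hB⟩ := hA.exists_isAtom_subset hρμ
  exact hFμ B (hBA.trans hAF) hB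

end MeasureTheory.Measure

namespace ContinuousLinearMap

variable {𝕜 E : Type*} [RCLike 𝕜] [NormedAddCommGroup E] [InnerProductSpace 𝕜 E]

lemma IsPositive.eq_zero_iff_forall_reApplyInnerSelf {T : E →L[𝕜] E} (hT : T.IsPositive) :
    T = 0 ↔ ∀ x, T.reApplyInnerSelf x = 0 := by
  rw [← coe_inj, toLinearMap_zero, ← hT.isSymmetric.inner_map_self_eq_zero]
  simp [← hT.isSymmetric.coe_reApplyInnerSelf_apply]

end ContinuousLinearMap

namespace POVM

variable {X : Type*} [MeasurableSpace X] {H : Type*} [NormedAddCommGroup H]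
  [InnerProductSpace ℂ H] [CompleteSpace H] (ν : POVM X H) {A B E S : Set X}

lemma isPositive_apply (hE : MeasurableSet E) : (ν.toFun E).IsPositive :=
  (ContinuousLinearMap.nonneg_iff_isPositive _).1 (ν.pos' E hE)

open Classical in
noncomputable def innerMeasure (x y : H) : ComplexMeasure X where
  measureOf' E := if MeasurableSet E then ⟪ν.toFun E x, y⟫_ℂ else 0
  empty' := by simp [ν.empty']
  not_measurable' _ hE := if_neg hE
  m_iUnion' E hE hd := by
    simpa [hE, MeasurableSet.iUnion hE] using ν.additive' E hE hd x y

lemma innerMeasure_apply (hE : MeasurableSet E) (x y : H) :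
    ν.innerMeasure x y E = ⟪ν.toFun E x, y⟫_ℂ :=
  if_pos hE

lemma apply_union (hA : MeasurableSet A) (hB : MeasurableSet B) (hAB : Disjoint A B) :
    ν.toFun (A ∪ B) = ν.toFun A + ν.toFun B := by
  ext x
  refine ext_inner_right ℂ fun y => ?_
  simpa [innerMeasure_apply, hA, hB, hA.union hB, inner_add_left] using
    VectorMeasure.of_union (v := ν.innerMeasure x y) hAB hA hB

lemma apply_eq_apply_iff (hA : MeasurableSet A) (hB : MeasurableSet B) (hBA : B ⊆ A) :
    ν.toFun B = ν.toFun A ↔ ν.toFun (A \ B) = 0 := by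
  rw [← union_sdiff_cancel hBA, ν.apply_union hB (hA.diff hB) disjoint_sdiff_right,
    union_sdiff_cancel hBA, left_eq_add]

noncomputable def quadMeasure (x : H) : Measure X :=
  Measure.ofMeasurable (fun E _ => ENNReal.ofReal ((ν.toFun E).reApplyInnerSelf x))
    (by simp [ν.empty', ContinuousLinearMap.reApplyInnerSelf_apply]) fun E hE hd => by
      have h := Complex.hasSum_re (ν.additive' E hE hd x x)
      simp only [ContinuousLinearMap.reApplyInnerSelf_apply, RCLike.re_to_complex]
      rw [← h.tsum_eq]
      exact ENNReal.ofReal_tsum_of_nonneg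
        (fun n => (ν.isPositive_apply (hE n)).re_inner_nonneg_left x) h.summable

lemma quadMeasure_apply (hE : MeasurableSet E) (x : H) :
    ν.quadMeasure x E = ENNReal.ofReal ((ν.toFun E).reApplyInnerSelf x) :=
  Measure.ofMeasurable_apply E hE

instance (x : H) : IsFiniteMeasure (ν.quadMeasure x) :=
  ⟨by simp [ν.quadMeasure_apply MeasurableSet.univ]⟩

lemma quadMeasure_eq_zero_iff (hE : MeasurableSet E) (x : H) :
    ν.quadMeasure x E = 0 ↔ (ν.toFun E).reApplyInnerSelf x = 0 := by
  rw [ν.quadMeasure_apply hE, ENNReal.ofReal_eq_zero]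
  exact ⟨fun h => h.antisymm ((ν.isPositive_apply hE).2 x), le_of_eq⟩

def restrict (S : Set X) (hS : MeasurableSet S) : POVM X H where
  toFun E := ν.toFun (E ∩ S)
  empty' := by rw [empty_inter, ν.empty']
  pos' E hE := ν.pos' _ (hE.inter hS)
  additive' E hE hd x y := by
    rw [iUnion_inter]
    exact ν.additive' _ (fun n => (hE n).inter hS)
      (fun i j hij => (hd hij).mono inter_subset_left inter_subset_left) x y

@[simp]
lemma restrict_apply (hS : MeasurableSet S) : (ν.restrict S hS).toFun E = ν.toFun (E ∩ S) :=
  rfl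

lemma apply_eq_restrict_add_restrict_compl (hS : MeasurableSet S) (hE : MeasurableSet E) :
    ν.toFun E = (ν.restrict S hS).toFun E + (ν.restrict Sᶜ hS.compl).toFun E := by
  rw [restrict_apply, restrict_apply, ← ν.apply_union (hE.inter hS) (hE.inter hS.compl)
    (disjoint_compl_right.mono inter_subset_right inter_subset_right), inter_union_compl]

variable {ν}

lemma IsAtomOf.restrict (h : ν.IsAtomOf A) (hS : MeasurableSet S) (hAS : A ⊆ S) :
    (ν.restrict S hS).IsAtomOf A := by
  obtain ⟨hA, hνA, hA_sub⟩ := h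
  refine ⟨hA, by rwa [restrict_apply, inter_eq_left.2 hAS], fun B hBA hB => ?_⟩
  rw [restrict_apply, restrict_apply, inter_eq_left.2 hAS, inter_eq_left.2 (hBA.trans hAS)]
  exact hA_sub B hBA hB

lemma IsAtomOf.of_restrict {hS : MeasurableSet S} (h : (ν.restrict S hS).IsAtomOf A) :
    ν.IsAtomOf (A ∩ S) := by
  obtain ⟨hA, hνA, hA_sub⟩ := h
  refine ⟨hA.inter hS, hνA, fun B hBAS hB => ?_⟩
  have := hA_sub B (hBAS.trans inter_subset_left) hB
  rwa [restrict_apply, restrict_apply, inter_eq_left.2 (hBAS.trans inter_subset_right)] at this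

variable (ν) [TopologicalSpace.SeparableSpace H]

noncomputable def controlMeasure : Measure X :=
  (Measure.sum fun n => ν.quadMeasure (TopologicalSpace.denseSeq H n)).toFinite

instance : IsFiniteMeasure ν.controlMeasure := by
  unfold controlMeasure
  infer_instance

lemma controlMeasure_eq_zero_iff (hE : MeasurableSet E) :
    ν.controlMeasure E = 0 ↔ ν.toFun E = 0 := by
  simp only [controlMeasure, toFinite_apply_eq_zero_iff, Measure.sum_apply_eq_zero,
    ν.quadMeasure_eq_zero_iff hE, (ν.isPositive_apply hE).eq_zero_iff_forall_reApplyInnerSelf]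
  refine ⟨fun h => congrFun ((TopologicalSpace.denseRange_denseSeq H).equalizer
    (ν.toFun E).reApplyInnerSelf_continuous continuous_const (funext h)), fun h n => h _⟩

lemma isAtomOf_iff_isAtom_controlMeasure : ν.IsAtomOf A ↔ ν.controlMeasure.IsAtom A := by
  refine and_congr_right fun hA => ?_
  rw [ne_eq, ne_eq, ν.controlMeasure_eq_zero_iff hA]
  refine and_congr_right fun _ => forall₂_congr fun B hBA => forall_congr' fun hB => ?_
  rw [ν.apply_eq_apply_iff hA hB hBA, ν.controlMeasure_eq_zero_iff hB,
    ν.controlMeasure_eq_zero_iff (hA.diff hB)]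

variable {ν} in
lemma Atomic.exists_isAtom_controlMeasure_subset (h : ν.Atomic)
    (hE : MeasurableSet E) (hνE : ν.controlMeasure E ≠ 0) :
    ∃ A ⊆ E, ν.controlMeasure.IsAtom A := by
  obtain ⟨A, hAE, hA⟩ := h E hE ((ν.controlMeasure_eq_zero_iff hE).not.1 hνE)
  exact ⟨A, hAE, ν.isAtomOf_iff_isAtom_controlMeasure.1 hA⟩

lemma controlMeasure_absolutelyContinuous_of_add {ν₁ ν₂ : POVM X H}
    (hsum : ∀ E, MeasurableSet E → ν.toFun E = ν₁.toFun E + ν₂.toFun E) :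
    ν₁.controlMeasure ≪ ν.controlMeasure :=
  .mk fun E hE h => by
    rw [controlMeasure_eq_zero_iff _ hE] at h ⊢
    exact ((add_eq_zero_iff_of_nonneg (ν₁.pos' E hE) (ν₂.pos' E hE)).1
      ((hsum E hE).symm.trans h)).1

lemma atomic_restrict_sUnion {s : Set (Set X)} (hs : s.Countable)
    (hs_atom : ∀ A ∈ s, ν.controlMeasure.IsAtom A) (hS : MeasurableSet (⋃₀ s)) :
    (ν.restrict (⋃₀ s) hS).Atomic := by
  intro E hE hνE
  rw [restrict_apply, ne_eq, ← ν.controlMeasure_eq_zero_iff (hE.inter hS)] at hνE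
  obtain ⟨A, hA, hEA⟩ := Measure.exists_mem_measure_inter_ne_zero hs hνE
  have hEA_atom := (hs_atom A hA).of_subset inter_subset_right (hE.inter (hs_atom A hA).1) hEA
  exact ⟨E ∩ A, inter_subset_left, (ν.isAtomOf_iff_isAtom_controlMeasure.2 hEA_atom).restrict hS
    (inter_subset_right.trans (subset_sUnion_of_mem hA))⟩

lemma nonatomic_restrict_compl (hS : MeasurableSet S)
    (hS_max : ∀ A, ν.controlMeasure.IsAtom A → ¬ A ⊆ Sᶜ) :
    (ν.restrict Sᶜ hS.compl).Nonatomic := fun _ hA =>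
  hS_max _ (ν.isAtomOf_iff_isAtom_controlMeasure.1 hA.of_restrict) inter_subset_right

lemma apply_eq_restrict_apply_of_atomic_add_nonatomic {νa νna : POVM X H}
    (hsum : ∀ E, MeasurableSet E → ν.toFun E = νa.toFun E + νna.toFun E)
    (ha : νa.Atomic) (hna : νna.Nonatomic) {s : Set (Set X)} (hs : s.Countable)
    (hs_atom : ∀ A ∈ s, ν.controlMeasure.IsAtom A)
    (hs_max : ∀ A, ν.controlMeasure.IsAtom A → ¬ A ⊆ (⋃₀ s)ᶜ) (hS : MeasurableSet (⋃₀ s))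
    (hE : MeasurableSet E) : νa.toFun E = (ν.restrict (⋃₀ s) hS).toFun E := by
  have hna_S : νna.toFun (E ∩ ⋃₀ s) = 0 := by
    rw [← controlMeasure_eq_zero_iff _ (hE.inter hS)]
    refine Measure.measure_eq_zero_of_subset_sUnion_isAtom
      (controlMeasure_absolutelyContinuous_of_add ν fun F hF => (hsum F hF).trans (add_comm _ _))
      (fun A hA => hna A ((isAtomOf_iff_isAtom_controlMeasure _).2 hA)) hs hs_atom (hE.inter hS)
      inter_subset_right
  have ha_Sc : νa.toFun (E ∩ (⋃₀ s)ᶜ) = 0 := by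
    rw [← controlMeasure_eq_zero_iff _ (hE.inter hS.compl)]
    exact Measure.measure_eq_zero_of_forall_not_isAtom_subset
      (controlMeasure_absolutelyContinuous_of_add ν hsum)
      (fun _ hF hνF => ha.exists_isAtom_controlMeasure_subset hF hνF) (hE.inter hS.compl)
      fun A hA hA_atom => hs_max A hA_atom (hA.trans inter_subset_right)
  rw [νa.apply_eq_restrict_add_restrict_compl hS hE, restrict_apply, restrict_apply, ha_Sc,
    add_zero, restrict_apply, hsum _ (hE.inter hS), hna_S, add_zero]

end POVM

/-- Every POVM into the bounded operators on a separable Hilbert space can be written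
uniquely as the sum of an atomic POVM and a nonatomic POVM. -/
theorem povm_atomic_nonatomic_decomposition {X : Type*} [MeasurableSpace X]
    {H : Type*} [NormedAddCommGroup H] [InnerProductSpace ℂ H] [CompleteSpace H]
    [TopologicalSpace.SeparableSpace H] (ν : POVM X H) :
    ∃ νa νna : POVM X H, νa.Atomic ∧ νna.Nonatomic ∧
      (∀ E : Set X, MeasurableSet E → ν.toFun E = νa.toFun E + νna.toFun E) ∧
      ∀ νa' νna' : POVM X H, νa'.Atomic → νna'.Nonatomic →
        (∀ E : Set X, MeasurableSet E → ν.toFun E = νa'.toFun E + νna'.toFun E) →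
        ∀ E : Set X, MeasurableSet E → νa'.toFun E = νa.toFun E ∧ νna'.toFun E = νna.toFun E := by
  obtain ⟨s, hs, hs_atom, hs_max⟩ :=
    ν.controlMeasure.exists_countable_isAtom_forall_not_subset_compl
  have hS : MeasurableSet (⋃₀ s) := .sUnion hs fun A hA => (hs_atom A hA).1
  refine ⟨ν.restrict _ hS, ν.restrict _ hS.compl, ν.atomic_restrict_sUnion hs hs_atom hS,
    ν.nonatomic_restrict_compl hS hs_max,
    fun E hE => ν.apply_eq_restrict_add_restrict_compl hS hE, ?_⟩
  intro νa νna ha hna hsum E hE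
  have hνa : νa.toFun E = (ν.restrict _ hS).toFun E :=
    ν.apply_eq_restrict_apply_of_atomic_add_nonatomic hsum ha hna hs hs_atom hs_max hS hE
  refine ⟨hνa, add_left_cancel (a := νa.toFun E) ?_⟩
  rw [← hsum E hE, hνa, ← ν.apply_eq_restrict_add_restrict_compl hS hE]
end
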